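/- Let F_q(m, n, d) denote the maximum cardinality of a set R of functions from an m-element set B to an n-element set A such that R does not (A, q)-shatter any (d+1)-element subset of B (where 2 ≤ q ≤ n). Then F_q(m, n, d) ≤ (q-1)·F_q(m-1, n, d) + n·C(n, q)·F_q(m-1, n, d-1) for all m ≥ 1, where C(n,q) is the binomial coefficient. -/

import Mathlib

/-- `S` is `(L, q)`-shattered by `R`. -/
def Shatters {U V : Type*} (R : Set (U → V)) (S : Finset U) (L : Finset V) (q : ℕ) : Prop :=
  ∃ c : Fin q → U → V,
    (∀ i, ∀ x ∈ S, c i x ∈ L) ∧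
    (∀ x ∈ S, ∀ i j : Fin q, i ≠ j → c i x ≠ c j x) ∧
    (∀ h : U → Fin q, ∃ f ∈ R, ∀ x ∈ S, f x = c (h x) x)

/-- `Fq q m n d`: the maximum cardinality of a family `R` of functions from an
`m`-element set to an `n`-element set that does not `(A, q)`-shatter any
`(d+1)`-element subset of the domain. -/
noncomputable def Fq (q m n d : ℕ) : ℕ :=
  sSup {r : ℕ | ∃ R : Finset (Fin m → Fin n), R.card = r ∧
    ∀ S : Finset (Fin m), S.card = d + 1 →
      ¬ Shatters (R : Set (Fin m → Fin n)) S Finset.univ q}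

/-! Write each `f ∈ R` as its restriction `g = Fin.init f` to the first `m - 1` points together
with its value at the last point, and let `Φ(g)` be the set of last values occurring with `g`.
Then `|R| = ∑_g |Φ(g)| ≤ ∑_g (q - 1 + C(|Φ(g)|, q))`. The restrictions `g` form a family that
shatters no `(d+1)`-set, which bounds the first part. Double counting turns `∑_g C(|Φ(g)|, q)`
into a sum over the `q`-sets `L` of the number of `g` with `L ⊆ Φ(g)`; such a family shatters no
`d`-set `S`, since `S` plus the last point, coloured through `L` there, would be shattered by `R`.
-/

open Finset

section Shatters

variable {U V : Type*}

def NoShatteredSetOfCard (R : Set (U → V)) (L : Finset V) (q s : ℕ) : Prop :=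
  ∀ S : Finset U, S.card = s → ¬ Shatters R S L q

theorem shatters_empty {R : Set (U → V)} (hR : R.Nonempty) (L : Finset V) (q : ℕ) :
    Shatters R ∅ L q := by
  obtain ⟨f, hf⟩ := hR
  exact ⟨fun _ => f, by simp, by simp, fun _ => ⟨f, hf, by simp⟩⟩

theorem Shatters.of_image_comp {U' : Type*} [Nonempty V] {R : Set (U → V)} {S : Finset U'}
    {L : Finset V} {q : ℕ} (e : U' ↪ U) (h : Shatters ((· ∘ e) '' R) S L q) :
    Shatters R (S.map e) L q := by
  obtain ⟨c, hcL, hdist, hcov⟩ := h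
  have hext : ∀ i x, Function.extend e (c i) (fun _ => Classical.arbitrary V) (e x) = c i x :=
    fun i => e.injective.extend_apply _ _
  refine ⟨fun i => Function.extend e (c i) (fun _ => Classical.arbitrary V), ?_, ?_, ?_⟩
  · simpa [hext] using hcL
  · simpa [hext] using hdist
  · intro h
    obtain ⟨_, ⟨f, hf, rfl⟩, hfc⟩ := hcov (h ∘ e)
    exact ⟨f, hf, by simpa [hext] using hfc⟩

end Shatters

theorem Shatters.snoc {V : Type*} {k q : ℕ} {T : Set (Fin k → V)} {R : Set (Fin (k + 1) → V)}
    {S : Finset (Fin k)} {L L' : Finset V} (hT : Shatters T S L' q) (hL : L.card = q)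
    (hLL' : L ⊆ L') (hTR : ∀ g ∈ T, ∀ b ∈ L, Fin.snoc g b ∈ R) :
    Shatters R (insert (Fin.last k) (S.map Fin.castSuccEmb)) L' q := by
  obtain ⟨c, hcL, hdist, hcov⟩ := hT
  set l : Fin q ≃ L := (L.equivFinOfCardEq hL).symm
  refine ⟨fun i => Fin.snoc (c i) (l i), ?_, ?_, ?_⟩
  · intro i
    simpa using ⟨hLL' (l i).2, hcL i⟩
  · simp only [mem_insert, mem_map, Fin.coe_castSuccEmb]
    rintro x (rfl | ⟨y, hy, rfl⟩) i j hij
    · simpa [Subtype.ext_iff] using l.injective.ne hij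
    · simpa using hdist y hy i j hij
  · intro h
    obtain ⟨g, hg, hgc⟩ := hcov (h ∘ Fin.castSucc)
    refine ⟨Fin.snoc g (l (h (Fin.last k))), hTR g hg _ (l _).2, ?_⟩
    simp only [mem_insert, mem_map, Fin.coe_castSuccEmb]
    rintro x (rfl | ⟨y, hy, rfl⟩)
    · simp
    · simpa using hgc y hy

theorem card_insert_last_map_castSuccEmb {k : ℕ} (S : Finset (Fin k)) :
    (insert (Fin.last k) (S.map Fin.castSuccEmb)).card = S.card + 1 := by
  rw [card_insert_of_notMem (by simp [Fin.castSucc_ne_last]), card_map]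

theorem le_sub_one_add_choose {q : ℕ} (hq : 1 ≤ q) (t : ℕ) : t ≤ q - 1 + t.choose q := by
  obtain ⟨p, rfl⟩ := Nat.exists_eq_add_of_le' hq
  induction t with
  | zero => simp
  | succ t ih =>
    rcases lt_or_ge t p with h | h
    · omega
    · have := Nat.choose_pos h
      rw [Nat.choose_succ_succ']
      omega

section Counting

variable {V : Type*} [Fintype V] [DecidableEq V] {k : ℕ}

def lastFiber (R : Finset (Fin (k + 1) → V)) (g : Fin k → V) : Finset V :=
  {b | Fin.snoc g b ∈ R}

def extendableBy (R : Finset (Fin (k + 1) → V)) (L : Finset V) : Finset (Fin k → V) :=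
  {g ∈ R.image Fin.init | L ⊆ lastFiber R g}

theorem card_eq_sum_card_lastFiber (R : Finset (Fin (k + 1) → V)) :
    R.card = ∑ g ∈ R.image Fin.init, (lastFiber R g).card := by
  rw [card_eq_sum_card_image Fin.init R]
  refine sum_congr rfl fun g _ => ?_
  have hfiber : {f ∈ R | Fin.init f = g} =
      (lastFiber R g).map ⟨Fin.snoc g, Fin.snoc_right_injective (α := fun _ => V) g⟩ := by
    ext f
    simp only [lastFiber, mem_filter, mem_map, mem_univ, true_and, Function.Embedding.coeFn_mk]
    constructor
    · rintro ⟨hf, rfl⟩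
      exact ⟨f (Fin.last k), by simpa [Fin.snoc_init_self]⟩
    · rintro ⟨b, hb, rfl⟩
      simp [hb, Fin.init_snoc]
  rw [hfiber, card_map]

theorem sum_choose_card_lastFiber (R : Finset (Fin (k + 1) → V)) (q : ℕ) :
    ∑ g ∈ R.image Fin.init, (lastFiber R g).card.choose q =
      ∑ L ∈ powersetCard q univ, (extendableBy R L).card := by
  refine Eq.trans (sum_congr rfl fun g _ => ?_)
    (sum_card_bipartiteAbove_eq_sum_card_bipartiteBelow (fun g L => L ⊆ lastFiber R g))
  rw [← card_powersetCard]
  congr 1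
  ext L
  simp [bipartiteAbove, mem_powersetCard, and_comm]

theorem card_le_mul_card_image_init_add_sum_card_extendableBy {q : ℕ} (hq : 1 ≤ q)
    (R : Finset (Fin (k + 1) → V)) :
    R.card ≤ (q - 1) * (R.image Fin.init).card +
      ∑ L ∈ powersetCard q univ, (extendableBy R L).card :=
  calc R.card = ∑ g ∈ R.image Fin.init, (lastFiber R g).card := card_eq_sum_card_lastFiber R
    _ ≤ ∑ g ∈ R.image Fin.init, (q - 1 + (lastFiber R g).card.choose q) :=
      sum_le_sum fun g _ => le_sub_one_add_choose hq _
    _ = _ := by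
      rw [sum_add_distrib, sum_const, smul_eq_mul, mul_comm, sum_choose_card_lastFiber]

end Counting

theorem NoShatteredSetOfCard.image_init {V : Type*} [Nonempty V] [DecidableEq V] {k q s : ℕ}
    {R : Finset (Fin (k + 1) → V)} {L : Finset V}
    (hR : NoShatteredSetOfCard (R : Set (Fin (k + 1) → V)) L q s) :
    NoShatteredSetOfCard ((R.image Fin.init : Finset _) : Set (Fin k → V)) L q s := by
  intro S hS hshat
  refine hR (S.map Fin.castSuccEmb) (by rwa [card_map]) (Shatters.of_image_comp _ ?_)
  rwa [coe_image] at hshat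

theorem NoShatteredSetOfCard.extendableBy {V : Type*} [Fintype V] [DecidableEq V] {k q s : ℕ}
    {R : Finset (Fin (k + 1) → V)} {L L' : Finset V}
    (hR : NoShatteredSetOfCard (R : Set (Fin (k + 1) → V)) L' q (s + 1)) (hL : L.card = q)
    (hLL' : L ⊆ L') :
    NoShatteredSetOfCard (extendableBy R L : Set (Fin k → V)) L' q s := by
  refine fun S hS hshat => hR _ (by rw [card_insert_last_map_castSuccEmb, hS])
    (hshat.snoc hL hLL' fun g hg b hb => ?_)
  simpa [lastFiber] using (mem_filter.1 hg).2 hb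

theorem card_le_Fq {q m n d : ℕ} {R : Finset (Fin m → Fin n)}
    (hR : NoShatteredSetOfCard (R : Set (Fin m → Fin n)) univ q (d + 1)) :
    R.card ≤ Fq q m n d :=
  le_csSup ⟨Fintype.card (Fin m → Fin n), by rintro _ ⟨R', rfl, -⟩; exact card_le_univ R'⟩
    ⟨R, rfl, hR⟩

theorem card_extendableBy_le_Fq {q k n d : ℕ} {R : Finset (Fin (k + 1) → Fin n)}
    {L : Finset (Fin n)} (hR : NoShatteredSetOfCard (R : Set (Fin (k + 1) → Fin n)) univ q (d + 1))
    (hL : L.card = q) :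
    (extendableBy R L).card ≤ Fq q k n (d - 1) := by
  have hext := hR.extendableBy hL (subset_univ L)
  cases d with
  | zero =>
    -- here `d - 1 = 0`; a nonempty family would shatter `∅`
    have hempty : extendableBy R L = ∅ :=
      not_nonempty_iff_eq_empty.1 fun hne => hext ∅ rfl (shatters_empty hne _ _)
    simp [hempty]
  | succ d => exact card_le_Fq hext

theorem stmt1 (q n m d : ℕ) (hq2 : 2 ≤ q) (hqn : q ≤ n) (hm : 1 ≤ m) :
    Fq q m n d ≤ (q - 1) * Fq q (m - 1) n d + n * n.choose q * Fq q (m - 1) n (d - 1) := by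
  obtain ⟨k, rfl⟩ : ∃ k, m = k + 1 := ⟨m - 1, by omega⟩
  have : Nonempty (Fin n) := ⟨⟨0, by omega⟩⟩
  rw [Nat.add_sub_cancel]
  refine csSup_le' ?_
  rintro _ ⟨R, rfl, hR⟩
  calc R.card ≤ (q - 1) * (R.image Fin.init).card +
        ∑ L ∈ powersetCard q univ, (extendableBy R L).card :=
      card_le_mul_card_image_init_add_sum_card_extendableBy (by omega) R
    _ ≤ (q - 1) * Fq q k n d + ∑ L ∈ powersetCard q (univ : Finset (Fin n)), Fq q k n (d - 1) := by
      gcongr with L hL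
      · exact card_le_Fq (NoShatteredSetOfCard.image_init hR)
      · exact card_extendableBy_le_Fq hR (mem_powersetCard.1 hL).2
    _ = (q - 1) * Fq q k n d + 1 * n.choose q * Fq q k n (d - 1) := by simp
    _ ≤ (q - 1) * Fq q k n d + n * n.choose q * Fq q k n (d - 1) := by gcongr; omega
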